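/- Let $F$ be a totally real number field with class number $1$, let $p$ be a rational prime with $p \equiv 3 \pmod 4$ that remains inert in $F$, and let $K = F(\sqrt{-p})$. Then the set $\{1, (1+\sqrt{-p})/2\}$ is an $\mathcal{O}_F$-integral basis of $\mathcal{O}_K$, i.e., $\mathcal{O}_K = \mathcal{O}_F \oplus \mathcal{O}_F \cdot \frac{1+\sqrt{-p}}{2}$. -/

import Mathlib

/-!
Let `ω = (1 + α)/2`; it is integral because `ω² - ω = (p + 1)/4 ∈ ℤ`. Since `F(α) = K` has
degree 2, `α ∉ F`, so `{1, ω}` is an `F`-basis of `K`, and `Tr ω = 1` because `Tr α = 0`.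
Write an integral `x` as `a + b ω` with `a, b ∈ F`. Then `2x - Tr x = b α` is integral, hence so
are the elements `-(bα)α = p b` and `-(bα)² = p b²` of `F`. As `(p b)² = p · (p b²)` and `p`
is prime in `𝓞 F`, `p` divides `p b`, so `b ∈ 𝓞 F`, and then `a = x - b ω ∈ 𝓞 F`.
-/

open NumberField

section QuadraticBasis

variable {F K : Type*} [Field F] [Field K] [Algebra F K] {α : K}

theorem linearIndependent_one_of_notMem_bot (hα : α ∉ (⊥ : Subalgebra F K)) :
    LinearIndependent F ![1, α] := by
  refine (LinearIndependent.pair_iff' one_ne_zero).mpr fun a ha => hα ?_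
  rw [← ha, ← Algebra.algebraMap_eq_smul_one]
  exact Subalgebra.algebraMap_mem _ a

theorem notMem_bot_of_adjoin_eq_top (hadj : Algebra.adjoin F {α} = ⊤)
    (hdeg : Module.finrank F K ≠ 1) : α ∉ (⊥ : Subalgebra F K) := fun hα =>
  hdeg <| Subalgebra.bot_eq_top_iff_finrank_eq_one.mp <|
    top_le_iff.mp (hadj ▸ Algebra.adjoin_le (Set.singleton_subset_iff.mpr hα))

noncomputable def basisOneOfNotMemBot (hdeg : Module.finrank F K = 2)
    (hα : α ∉ (⊥ : Subalgebra F K)) : Module.Basis (Fin 2) F K :=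
  basisOfLinearIndependentOfCardEqFinrank (linearIndependent_one_of_notMem_bot hα)
    (by simp [hdeg])

@[simp]
theorem coe_basisOneOfNotMemBot (hdeg : Module.finrank F K = 2)
    (hα : α ∉ (⊥ : Subalgebra F K)) : ⇑(basisOneOfNotMemBot hdeg hα) = ![1, α] :=
  coe_basisOfLinearIndependentOfCardEqFinrank _ _

theorem eq_add_mul_iff_basisOneOfNotMemBot_repr (hdeg : Module.finrank F K = 2)
    (hα : α ∉ (⊥ : Subalgebra F K)) {x : K} {a b : F} :
    x = algebraMap F K a + algebraMap F K b * α ↔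
      (basisOneOfNotMemBot hdeg hα).repr x 0 = a ∧
        (basisOneOfNotMemBot hdeg hα).repr x 1 = b := by
  set B := basisOneOfNotMemBot hdeg hα
  have hsum : algebraMap F K a + algebraMap F K b * α = B.equivFun.symm ![a, b] := by
    simp [B, Fin.sum_univ_two, Algebra.smul_def]
  rw [hsum, LinearEquiv.eq_symm_apply, funext_iff, Fin.forall_fin_two]
  simp

theorem trace_eq_zero_of_sq_eq_algebraMap (hdeg : Module.finrank F K = 2)
    (hα : α ∉ (⊥ : Subalgebra F K)) {d : F} (hd : α ^ 2 = algebraMap F K d) :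
    Algebra.trace F K α = 0 := by
  let B := basisOneOfNotMemBot hdeg hα
  have h0 : α * B 0 = B 1 := by simp [B]
  have h1 : α * B 1 = d • B 0 := by simp [B, ← sq, hd, Algebra.smul_def]
  rw [Algebra.trace_eq_matrix_trace B, Matrix.trace, Fin.sum_univ_two, Matrix.diag_apply,
    Matrix.diag_apply, Algebra.leftMulMatrix_eq_repr_mul, Algebra.leftMulMatrix_eq_repr_mul, h0,
    h1, map_smul, B.repr_self, B.repr_self]
  simp

end QuadraticBasis

theorem exists_algebraMap_eq_of_prime_mul_of_prime_mul_sq {R L : Type*} [CommRing R] [IsDomain R]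
    [Field L] [Algebra R L] [FaithfulSMul R L] {π : R} (hπ : Prime π) {c : L}
    (h₁ : ∃ a, algebraMap R L a = algebraMap R L π * c)
    (h₂ : ∃ b, algebraMap R L b = algebraMap R L π * c ^ 2) :
    ∃ t, algebraMap R L t = c := by
  obtain ⟨a, ha⟩ := h₁
  obtain ⟨b, hb⟩ := h₂
  have hinj := FaithfulSMul.algebraMap_injective R L
  have hsq : a * a = π * b := hinj <| by simp only [map_mul, ha, hb]; ring
  obtain ⟨t, rfl⟩ := hπ.dvd_of_dvd_pow (n := 2) ⟨b, by rw [sq, hsq]⟩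
  refine ⟨t, mul_left_cancel₀ (a := algebraMap R L π) ?_ (by rw [← map_mul, ha])⟩
  exact (map_ne_zero_iff _ hinj).mpr hπ.ne_zero

theorem isIntegral_of_isIntegral_algebraMap_mul_of_sq_eq_neg_prime {F K : Type*} [Field F]
    [Field K] [Algebra F K] {α : K} {p : ℕ} (hp : Prime (p : 𝓞 F)) (hα : α ^ 2 = -(p : K))
    {b : F} (hb : IsIntegral ℤ (algebraMap F K b * α)) : IsIntegral ℤ b := by
  have hαint : IsIntegral ℤ α := .of_pow two_pos <| hα ▸ (isIntegral_natCast p).neg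
  have hdesc (c : F) (hc : IsIntegral ℤ (algebraMap F K c)) :
      ∃ t : 𝓞 F, algebraMap (𝓞 F) F t = c :=
    IsIntegralClosure.isIntegral_iff.mp
      ((isIntegral_algebraMap_iff (algebraMap F K).injective).mp hc)
  refine IsIntegralClosure.isIntegral_iff.mpr
    (exists_algebraMap_eq_of_prime_mul_of_prime_mul_sq hp (hdesc _ ?_) (hdesc _ ?_))
  · rw [show algebraMap F K (algebraMap (𝓞 F) F p * b) = -(algebraMap F K b * α * α) by
      simp only [map_mul, map_natCast]; linear_combination algebraMap F K b * hα]
    exact (hb.mul hαint).neg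
  · rw [show algebraMap F K (algebraMap (𝓞 F) F p * b ^ 2) = -(algebraMap F K b * α) ^ 2 by
      simp only [map_mul, map_pow, map_natCast]; linear_combination algebraMap F K b ^ 2 * hα]
    exact (hb.pow 2).neg

theorem isIntegral_half_one_add {K : Type*} [Field K] [CharZero K] {α : K} {d : ℤ}
    (hd : d ≡ 1 [ZMOD 4]) (hα : α ^ 2 = d) : IsIntegral ℤ ((1 + α) / 2) := by
  obtain ⟨k, hk⟩ := Int.modEq_iff_dvd.mp hd.symm
  have hroot : ((1 + α) / 2) ^ 2 - (1 + α) / 2 - k = 0 := by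
    field_simp
    linear_combination hα + (by exact_mod_cast hk : (d : K) - 1 = 4 * k)
  refine ⟨.X ^ 2 - .X - .C k, by monicity!, ?_⟩
  rw [← Polynomial.aeval_def]
  simpa using hroot

section HalfIntegralBasis

variable {F K : Type*} [Field F] [CharZero F] [Field K] [Algebra F K] {α : K}

theorem half_one_add_notMem_bot (hα : α ∉ (⊥ : Subalgebra F K)) :
    (1 + α) / 2 ∉ (⊥ : Subalgebra F K) := fun hω => hα <| by
  have := Algebra.charZero_of_charZero F K
  rw [show α = 2 * ((1 + α) / 2) - 1 by field_simp; ring]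
  exact sub_mem (mul_mem (ofNat_mem _ 2) hω) (one_mem _)

theorem trace_half_one_add (hdeg : Module.finrank F K = 2) (hα : α ∉ (⊥ : Subalgebra F K))
    {d : F} (hd : α ^ 2 = algebraMap F K d) : Algebra.trace F K ((1 + α) / 2) = 1 := by
  have := Algebra.charZero_of_charZero F K
  have h : (2 : F) • ((1 + α) / 2) = 1 + α := by
    rw [Algebra.smul_def, map_ofNat]; field_simp
  have htr := congrArg (Algebra.trace F K) h
  rw [map_smul, map_add, trace_eq_zero_of_sq_eq_algebraMap hdeg hα hd,
    ← map_one (algebraMap F K), Algebra.trace_algebraMap, hdeg, smul_eq_mul] at htr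
  simpa using htr

theorem isIntegral_repr_basisOneOfNotMemBot_half_one_add (hdeg : Module.finrank F K = 2)
    {p : ℕ} (hp : Prime (p : 𝓞 F)) (hα : α ^ 2 = -(p : K))
    (hbot : α ∉ (⊥ : Subalgebra F K)) (hω : IsIntegral ℤ ((1 + α) / 2)) {x : K}
    (hx : IsIntegral ℤ x) (i : Fin 2) :
    IsIntegral ℤ ((basisOneOfNotMemBot hdeg (half_one_add_notMem_bot hbot)).repr x i) := by
  have := Algebra.charZero_of_charZero F K
  have : FiniteDimensional F K := Module.finite_of_finrank_eq_succ hdeg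
  set B := basisOneOfNotMemBot hdeg (half_one_add_notMem_bot hbot)
  set a := B.repr x 0
  set b := B.repr x 1
  have hx_eq : x = algebraMap F K a + algebraMap F K b * ((1 + α) / 2) :=
    (eq_add_mul_iff_basisOneOfNotMemBot_repr hdeg _).mpr ⟨rfl, rfl⟩
  have htr : Algebra.trace F K x = 2 * a + b := by
    have hd : α ^ 2 = algebraMap F K (-p) := by simp [hα]
    rw [hx_eq, map_add, ← Algebra.smul_def, map_smul, trace_half_one_add hdeg hbot hd,
      Algebra.trace_algebraMap, hdeg]
    simp
  have hy : algebraMap F K b * α = 2 * x - algebraMap F K (Algebra.trace F K x) := by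
    rw [htr, hx_eq, map_add, map_mul, map_ofNat]; field_simp; ring
  have hyint : IsIntegral ℤ (algebraMap F K b * α) :=
    hy ▸ ((isIntegral_natCast 2).mul hx).sub (Algebra.isIntegral_trace hx).algebraMap
  have hb : IsIntegral ℤ b :=
    isIntegral_of_isIntegral_algebraMap_mul_of_sq_eq_neg_prime hp hα hyint
  have ha : IsIntegral ℤ a := by
    refine (isIntegral_algebraMap_iff (algebraMap F K).injective).mp ?_
    rw [show algebraMap F K a = x - algebraMap F K b * ((1 + α) / 2) by rw [hx_eq]; ring]
    exact hx.sub (hb.algebraMap.mul hω)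
  fin_cases i
  exacts [ha, hb]

end HalfIntegralBasis

theorem integral_basis_of_imaginary_quadratic_ext_general {F K : Type*}
    [Field F] [NumberField F] [Field K] [Algebra F K]
    (p : ℕ) (hp4 : p % 4 = 3)
    (hinert : (Ideal.span {(p : RingOfIntegers F)}).IsPrime)
    (α : K) (hα : α ^ 2 = -(p : K))
    (hadj : Algebra.adjoin F {α} = ⊤)
    (hdeg : Module.finrank F K = 2) :
    ∃ ω : RingOfIntegers K, (ω : K) = (1 + α) / 2 ∧
      ∀ x : RingOfIntegers K, ∃! c : RingOfIntegers F × RingOfIntegers F,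
        (x : K) = algebraMap F K (c.1 : F) + algebraMap F K (c.2 : F) * (ω : K) := by
  have := Algebra.charZero_of_charZero F K
  have hbot := notMem_bot_of_adjoin_eq_top hadj (by omega : Module.finrank F K ≠ 1)
  have hprime : Prime (p : 𝓞 F) :=
    (Ideal.span_singleton_prime (Nat.cast_ne_zero.mpr (by omega))).mp hinert
  have hω : IsIntegral ℤ ((1 + α) / 2) :=
    isIntegral_half_one_add (d := -p) (by unfold Int.ModEq; omega) (by push_cast; exact hα)
  refine ⟨⟨_, hω⟩, rfl, fun x => ?_⟩
  have hcoord := isIntegral_repr_basisOneOfNotMemBot_half_one_add hdeg hprime hα hbot hω x.2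
  refine ⟨(⟨_, hcoord 0⟩, ⟨_, hcoord 1⟩),
    (eq_add_mul_iff_basisOneOfNotMemBot_repr hdeg _).mpr ⟨rfl, rfl⟩, fun c hc => ?_⟩
  obtain ⟨h0, h1⟩ := (eq_add_mul_iff_basisOneOfNotMemBot_repr hdeg _).mp hc
  exact Prod.ext (RingOfIntegers.ext h0.symm) (RingOfIntegers.ext h1.symm)

/-- if `F` is a totally real number field with class number 1, `p ≡ 3 (mod 4)`
is a rational prime that remains inert in `F`, and `K = F(√-p)`, then
`{1, (1+√-p)/2}` is an `𝓞_F`-integral basis of `𝓞_K`: every element of `𝓞_K` is uniquely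
`a + b·(1+√-p)/2` with `a, b ∈ 𝓞_F`. -/
theorem integral_basis_of_imaginary_quadratic_ext {F K : Type*}
    [Field F] [NumberField F] [Field K] [NumberField K] [Algebra F K]
    (htr : ∀ φ : F →+* ℂ, ComplexEmbedding.IsReal φ)
    (hcl : classNumber F = 1)
    (p : ℕ) (hp : p.Prime) (hp4 : p % 4 = 3)
    (hinert : (Ideal.span {(p : RingOfIntegers F)}).IsPrime)
    (α : K) (hα : α ^ 2 = -(p : K))
    (hadj : Algebra.adjoin F {α} = ⊤)
    (hdeg : Module.finrank F K = 2) :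
    ∃ ω : RingOfIntegers K, (ω : K) = (1 + α) / 2 ∧
      ∀ x : RingOfIntegers K, ∃! c : RingOfIntegers F × RingOfIntegers F,
        (x : K) = algebraMap F K (c.1 : F) + algebraMap F K (c.2 : F) * (ω : K) :=
  integral_basis_of_imaginary_quadratic_ext_general p hp4 hinert α hα hadj hdeg
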